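/- A breadth-first construction yields the grounded labelling: define inductively I_0 = {x ∈ Ar : x has no attackers}, O_{k+1} = {y : some attacker of y is in I_0 ∪ ... ∪ I_k}, I_{k+1} = {x : every attacker of x is in O_1 ∪ ... ∪ O_{k+1}}. Then the labelling assigning in to ∪_k I_k, out to ∪_k O_k, and undec otherwise, equals the grounded labelling of the framework. -/

import Mathlib

/-! Every argument entering the construction is labelled in (resp. out) by every complete
labelling, by strong induction on its stage: an attacker of a member of `I k` lies in some `O j`
with `j ≤ k`, so it has an attacker in an earlier `I i`. Conversely, labelling the stages in/out
and the rest undec gives a complete labelling; the only non-local point is that an argument all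
of whose (finitely many) attackers are out enters at the stage after the largest of theirs.
Minimality of the grounded labelling then forces equality. -/

inductive Label where
  | inn | out | und
deriving DecidableEq

/-- A labelling is admissible if every in-labelled argument has all its attackers
labelled out, and every out-labelled argument has at least one in-labelled attacker. -/
def Admissible {Ar : Type*} (att : Ar → Ar → Prop) (L : Ar → Label) : Prop :=
  (∀ x, L x = Label.inn → ∀ y, att y x → L y = Label.out) ∧
  (∀ x, L x = Label.out → ∃ y, att y x ∧ L y = Label.inn)

/-- A min-max numbering (with only natural-number values): in-arguments are numbered
1 + max of the numbers of their out-labelled attackers (max ∅ = 0), and out-arguments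
1 + min of the numbers of their in-labelled attackers. -/
def IsMinMax {Ar : Type*} (att : Ar → Ar → Prop) (L : Ar → Label) (MM : Ar → ℕ) : Prop :=
  (∀ x, L x = Label.inn → MM x = sSup (MM '' {y | att y x ∧ L y = Label.out}) + 1) ∧
  (∀ x, L x = Label.out → MM x = sInf (MM '' {y | att y x ∧ L y = Label.inn}) + 1)

/-- Strongly admissible: admissible and admitting a min-max numbering with only
natural-number (finite) values. -/
def StronglyAdmissible {Ar : Type*} (att : Ar → Ar → Prop) (L : Ar → Label) : Prop :=
  Admissible att L ∧ ∃ MM : Ar → ℕ, IsMinMax att L MM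

/-- Complete labelling: admissible, and every undec argument has an undec attacker
and no in-labelled attacker. -/
def CompleteLab {Ar : Type*} (att : Ar → Ar → Prop) (L : Ar → Label) : Prop :=
  Admissible att L ∧
  ∀ x, L x = Label.und →
    (∃ y, att y x ∧ L y = Label.und) ∧ ∀ y, att y x → L y ≠ Label.inn

/-- The order on labellings: Lab1 ⊑ Lab2 iff in(Lab1) ⊆ in(Lab2) and out(Lab1) ⊆ out(Lab2). -/
def LabLe {Ar : Type*} (L1 L2 : Ar → Label) : Prop :=
  (∀ x, L1 x = Label.inn → L2 x = Label.inn) ∧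
  (∀ x, L1 x = Label.out → L2 x = Label.out)

structure IsBreadthFirst {Ar : Type*} (att : Ar → Ar → Prop) (I O : ℕ → Set Ar) : Prop where
  in_zero : I 0 = {x | ∀ y, ¬ att y x}
  out_zero : O 0 = ∅
  out_succ : ∀ k, O (k+1) = {y | ∃ x, att x y ∧ ∃ j ≤ k, x ∈ I j}
  in_succ : ∀ k, I (k+1) = {x | ∀ y, att y x → ∃ j, 1 ≤ j ∧ j ≤ k+1 ∧ y ∈ O j}

open Classical in
/-- An argument lying in some `I k` and some `O j` would be labelled in, which is why
`breadthFirstLabelling_eq_out_iff` assumes disjointness. -/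
noncomputable def breadthFirstLabelling {Ar : Type*} (I O : ℕ → Set Ar) (x : Ar) : Label :=
  if ∃ k, x ∈ I k then .inn else if ∃ k, x ∈ O k then .out else .und

section

variable {Ar : Type*} {att : Ar → Ar → Prop} {I O : ℕ → Set Ar} {L : Ar → Label} {x y : Ar}
  {k : ℕ}

namespace CompleteLab

theorem eq_inn_of_forall_attacker_out (hL : CompleteLab att L)
    (hx : ∀ y, att y x → L y = .out) : L x = .inn := by
  cases hLx : L x with
  | inn => rfl
  | out =>
    obtain ⟨y, hyx, hy⟩ := hL.1.2 x hLx
    simp [hx y hyx] at hy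
  | und =>
    obtain ⟨⟨y, hyx, hy⟩, -⟩ := hL.2 x hLx
    simp [hx y hyx] at hy

theorem eq_out_of_attacker_inn (hL : CompleteLab att L) (hyx : att y x) (hy : L y = .inn) :
    L x = .out := by
  cases hLx : L x with
  | inn => simpa [hy] using hL.1.1 x hLx y hyx
  | out => rfl
  | und => exact absurd hy ((hL.2 x hLx).2 y hyx)

end CompleteLab

namespace IsBreadthFirst

theorem exists_attacker_of_mem_out (h : IsBreadthFirst att I O) (hx : x ∈ O k) :
    ∃ y j, att y x ∧ j < k ∧ y ∈ I j := by
  cases k with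
  | zero => simp [h.out_zero] at hx
  | succ m =>
    rw [h.out_succ m] at hx
    obtain ⟨y, hyx, j, hjm, hy⟩ := hx
    exact ⟨y, j, hyx, Nat.lt_succ_of_le hjm, hy⟩

theorem mem_out_succ (h : IsBreadthFirst att I O) (hyx : att y x) (hy : y ∈ I k) :
    x ∈ O (k+1) := by
  rw [h.out_succ k]
  exact ⟨y, hyx, k, le_rfl, hy⟩

theorem exists_mem_out_of_attacker (h : IsBreadthFirst att I O) (hx : x ∈ I k)
    (hyx : att y x) : ∃ j ≤ k, y ∈ O j := by
  cases k with
  | zero => exact absurd hyx ((h.in_zero ▸ hx : x ∈ {x | ∀ y, ¬ att y x}) y)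
  | succ m =>
    rw [h.in_succ m] at hx
    obtain ⟨j, -, hjk, hy⟩ := hx y hyx
    exact ⟨j, hjk, hy⟩

theorem exists_mem_in_of_forall_attacker [Finite Ar] (h : IsBreadthFirst att I O)
    (hx : ∀ y, att y x → ∃ k, y ∈ O k) : ∃ k, x ∈ I k := by
  choose! stage hstage using hx
  obtain ⟨M, hM⟩ := Finite.exists_le stage
  refine ⟨M + 1, ?_⟩
  rw [h.in_succ M]
  intro y hyx
  have hy := hstage y hyx
  have hpos : 1 ≤ stage y := by
    by_contra! h0
    simp [Nat.lt_one_iff.1 h0, h.out_zero] at hy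
  exact ⟨stage y, hpos, (hM y).trans M.le_succ, hy⟩

theorem eq_inn_of_mem_in (h : IsBreadthFirst att I O) (hL : CompleteLab att L)
    (hx : x ∈ I k) : L x = .inn := by
  induction k using Nat.strong_induction_on generalizing x with
  | _ k ih =>
    refine hL.eq_inn_of_forall_attacker_out fun y hyx => ?_
    obtain ⟨j, hjk, hy⟩ := h.exists_mem_out_of_attacker hx hyx
    obtain ⟨z, i, hzy, hij, hz⟩ := h.exists_attacker_of_mem_out hy
    exact hL.eq_out_of_attacker_inn hzy (ih i (by omega) hz)

theorem eq_out_of_mem_out (h : IsBreadthFirst att I O) (hL : CompleteLab att L)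
    (hx : x ∈ O k) : L x = .out := by
  obtain ⟨y, j, hyx, -, hy⟩ := h.exists_attacker_of_mem_out hx
  exact hL.eq_out_of_attacker_inn hyx (h.eq_inn_of_mem_in hL hy)

theorem disjoint_iUnion (h : IsBreadthFirst att I O) (hL : CompleteLab att L) :
    Disjoint (⋃ k, I k) (⋃ k, O k) := by
  refine Set.disjoint_left.2 fun x hxI hxO => ?_
  obtain ⟨k, hk⟩ := Set.mem_iUnion.1 hxI
  obtain ⟨j, hj⟩ := Set.mem_iUnion.1 hxO
  simpa [h.eq_inn_of_mem_in hL hk] using h.eq_out_of_mem_out hL hj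

end IsBreadthFirst

theorem breadthFirstLabelling_eq_inn_iff :
    breadthFirstLabelling I O x = .inn ↔ ∃ k, x ∈ I k := by
  unfold breadthFirstLabelling
  split_ifs <;> simp_all

theorem breadthFirstLabelling_eq_out_iff (hdisj : Disjoint (⋃ k, I k) (⋃ k, O k)) :
    breadthFirstLabelling I O x = .out ↔ ∃ k, x ∈ O k := by
  have hnot : (∃ k, x ∈ O k) → ¬ ∃ k, x ∈ I k := fun hO hI =>
    Set.disjoint_left.1 hdisj (Set.mem_iUnion.2 hI) (Set.mem_iUnion.2 hO)
  unfold breadthFirstLabelling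
  split_ifs <;> simp_all

theorem breadthFirstLabelling_eq_und_iff :
    breadthFirstLabelling I O x = .und ↔ (¬ ∃ k, x ∈ I k) ∧ ¬ ∃ k, x ∈ O k := by
  unfold breadthFirstLabelling
  split_ifs <;> simp_all

theorem IsBreadthFirst.completeLab_breadthFirstLabelling [Finite Ar]
    (h : IsBreadthFirst att I O) (hdisj : Disjoint (⋃ k, I k) (⋃ k, O k)) :
    CompleteLab att (breadthFirstLabelling I O) := by
  simp only [CompleteLab, Admissible, ne_eq, breadthFirstLabelling_eq_inn_iff,
    breadthFirstLabelling_eq_out_iff hdisj, breadthFirstLabelling_eq_und_iff]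
  refine ⟨⟨fun x ⟨k, hx⟩ y hyx => ?_, fun x ⟨k, hx⟩ => ?_⟩, fun x ⟨hxI, hxO⟩ => ?_⟩
  · obtain ⟨j, -, hy⟩ := h.exists_mem_out_of_attacker hx hyx
    exact ⟨j, hy⟩
  · obtain ⟨y, j, hyx, -, hy⟩ := h.exists_attacker_of_mem_out hx
    exact ⟨y, hyx, j, hy⟩
  · have hno_in : ∀ y, att y x → ¬ ∃ k, y ∈ I k := fun y hyx ⟨k, hy⟩ =>
      hxO ⟨k + 1, h.mem_out_succ hyx hy⟩
    refine ⟨?_, hno_in⟩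
    by_contra! hall
    exact hxI (h.exists_mem_in_of_forall_attacker fun y hyx =>
      hall y hyx (by simpa using hno_in y hyx))

end

/-- The breadth-first construction yields the grounded labelling. -/
theorem breadthFirst_grounded
    {Ar : Type*} [Fintype Ar] (att : Ar → Ar → Prop)
    (I O : ℕ → Set Ar)
    (hI0 : I 0 = {x | ∀ y, ¬ att y x})
    (hO0 : O 0 = ∅)
    (hO : ∀ k, O (k+1) = {y | ∃ x, att x y ∧ ∃ j ≤ k, x ∈ I j})
    (hI : ∀ k, I (k+1) = {x | ∀ y, att y x → ∃ j, 1 ≤ j ∧ j ≤ k+1 ∧ y ∈ O j})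
    (Lgr : Ar → Label)
    (hgr : CompleteLab att Lgr ∧ ∀ L, CompleteLab att L → LabLe Lgr L) :
    ∀ x, (Lgr x = Label.inn ↔ ∃ k, x ∈ I k) ∧ (Lgr x = Label.out ↔ ∃ k, x ∈ O k) := by
  have hbf : IsBreadthFirst att I O := ⟨hI0, hO0, hO, hI⟩
  obtain ⟨hgr_complete, hgr_least⟩ := hgr
  have hdisj := hbf.disjoint_iUnion hgr_complete
  have hle := hgr_least _ (hbf.completeLab_breadthFirstLabelling hdisj)
  intro x
  exact ⟨⟨fun hx => breadthFirstLabelling_eq_inn_iff.1 (hle.1 x hx),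
      fun ⟨_, hk⟩ => hbf.eq_inn_of_mem_in hgr_complete hk⟩,
    ⟨fun hx => (breadthFirstLabelling_eq_out_iff hdisj).1 (hle.2 x hx),
      fun ⟨_, hk⟩ => hbf.eq_out_of_mem_out hgr_complete hk⟩⟩
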